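/- Let w(t) be implicitly defined by the integral equation ∫_{t-w(t)}^{t} β(τ) dτ = x(t - w(t)), where β and x are differentiable functions with ẋ(s) = α(s) - β(s) for some function α. Then, wherever w is differentiable and α(t - w(t)) ≠ 0, the derivative satisfies ẇ(t) = 1 - β(t)/α(t - w(t)). -/

import Mathlib

/-! Write `u(s) = s - w(s)` for the arrival time of the fluid at the head of the queue.
Differentiating the defining relation `∫_{u(s)}^{s} β = x(u(s))` at `t` gives
`β(t) - β(u(t)) u'(t) = (α(u(t)) - β(u(t))) u'(t)`, i.e. `β(t) = α(u(t)) (1 - ẇ(t))`: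
the fluid served at time `t` is the fluid that arrived at `u(t)`, time-compressed by `u'(t)`. -/

theorem Continuous.hasDerivAt_integral_of_lower {β u : ℝ → ℝ} {u' t : ℝ} (hβ : Continuous β)
    (hu : HasDerivAt u u' t) :
    HasDerivAt (fun s => ∫ τ in u s..s, β τ) (β t - β (u t) * u') t := by
  have hprimitive : ∀ s, HasDerivAt (fun r => ∫ τ in (0 : ℝ)..r, β τ) (β s) s := fun s =>
    (hβ.integral_hasStrictDerivAt 0 s).hasDerivAt
  have hsplit : (fun s => ∫ τ in u s..s, β τ) =
      fun s => (∫ τ in (0 : ℝ)..s, β τ) - ∫ τ in (0 : ℝ)..u s, β τ := by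
    funext s
    rw [intervalIntegral.integral_interval_sub_left (hβ.intervalIntegrable _ _)
      (hβ.intervalIntegrable _ _)]
  rw [hsplit]
  exact (hprimitive t).sub ((hprimitive (u t)).comp t hu)

/-- If w is implicitly defined by ∫_{t-w(t)}^t β(τ) dτ = x(t - w(t)),
with ẋ = α - β, then wherever w is differentiable and α(t - w(t)) ≠ 0,
ẇ(t) = 1 - β(t)/α(t - w(t)). -/
theorem stmt_0 (α β x w w' : ℝ → ℝ)
    (hβ : Continuous β)
    (hx : ∀ s : ℝ, HasDerivAt x (α s - β s) s)
    (hrel : ∀ t : ℝ, (∫ τ in (t - w t)..t, β τ) = x (t - w t))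
    (t : ℝ)
    (hw : HasDerivAt w (w' t) t)
    (hα : α (t - w t) ≠ 0) :
    w' t = 1 - β t / α (t - w t) := by
  have hu : HasDerivAt (fun s => s - w s) (1 - w' t) t := (hasDerivAt_id t).sub hw
  have hlhs := hβ.hasDerivAt_integral_of_lower hu
  have hrhs : HasDerivAt (fun s => x (s - w s)) ((α (t - w t) - β (t - w t)) * (1 - w' t)) t :=
    (hx (t - w t)).comp t hu
  rw [funext hrel] at hlhs
  have hserved : β t = α (t - w t) * (1 - w' t) := by
    linear_combination hlhs.unique hrhs
  field_simp
  linear_combination hserved
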